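/- arXiv:2103.01911 — 2 statements merged into one kernel-verified Lean document; each statement's English description precedes it below -/
import Mathlib

section
/- Let A, H, B be atoms such that each of the two pairs A, H and B, H is linear (no variable occurs more than once in the pair A, H, and no variable occurs more than once in the pair B, H). If θ is a most general unifier of A and H, then the atom Bθ is linear. -/
/-! # First-order terms, substitutions, unification -/

inductive Term (F : Type) (V : Type) : Type
  | var : V → Term F V
  | app : F → List (Term F V) → Term F V

namespace Term

variable {F V : Type}

/-- The variable `v` occurs in the term. -/
inductive VarIn (v : V) : Term F V → Prop
  | var : VarIn v (Term.var v)
  | app {f : F} {ts : List (Term F V)} {t : Term F V} :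
      t ∈ ts → VarIn v t → VarIn v (Term.app f ts)

/-- A term is ground if it contains no variables. -/
def Ground (t : Term F V) : Prop := ∀ v, ¬ VarIn v t

/-- Application of a substitution (a map from variables to terms) to a term. -/
def subst (σ : V → Term F V) : Term F V → Term F V
  | var x => σ x
  | app f ts => app f (ts.attach.map fun ⟨t, _⟩ => t.subst σ)

/-- Number of occurrences of the variable `v` in a term. -/
def count [DecidableEq V] (v : V) : Term F V → ℕ
  | var x => if x = v then 1 else 0
  | app _ ts => (ts.attach.map fun ⟨t, _⟩ => t.count v).sum

/-- A term (or atom) is linear if no variable occurs in it more than once. -/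
def Linear [DecidableEq V] (t : Term F V) : Prop := ∀ v, count v t ≤ 1

def IsVar : Term F V → Prop
  | var _ => True
  | app _ _ => False

end Term

/-- A substitution. -/
abbrev Subst (F V : Type) := V → Term F V

/-- Composition of substitutions: `(σ.comp η)` is `ση`. -/
def Subst.comp {F V : Type} (σ η : Subst F V) : Subst F V := fun v => (σ v).subst η

/-- The substitution `{X/t}`. -/
def subst1 {F V : Type} [DecidableEq V] (X : V) (t : Term F V) : Subst F V :=
  fun v => if v = X then t else Term.var v

variable {F V : Type}

/-- `σ` unifies the two terms (or atoms) `A` and `H`. -/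
def IsUnifierPair (σ : Subst F V) (A H : Term F V) : Prop := A.subst σ = H.subst σ

/-- `σ` is a most general unifier of `A` and `H`. -/
def IsMGUPair (σ : Subst F V) (A H : Term F V) : Prop :=
  IsUnifierPair σ A H ∧ ∀ τ, IsUnifierPair τ A H → ∃ η, τ = σ.comp η

/-- An equation between terms. -/
abbrev Eqn (F V : Type) := Term F V × Term F V

/-- A set of equations. -/
abbrev EqSet (F V : Type) := Set (Eqn F V)

def Eqn.subst (σ : Subst F V) (e : Eqn F V) : Eqn F V := (e.1.subst σ, e.2.subst σ)

/-- `σ` is a unifier of the equation set `E`. -/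
def IsUnifier (σ : Subst F V) (E : EqSet F V) : Prop := ∀ e ∈ E, e.1.subst σ = e.2.subst σ

def Unifiable (E : EqSet F V) : Prop := ∃ σ, IsUnifier σ E

/-- `σ` is a most general unifier of the equation set `E`. -/
def IsMGU (σ : Subst F V) (E : EqSet F V) : Prop :=
  IsUnifier σ E ∧ ∀ τ, IsUnifier τ E → ∃ η, τ = σ.comp η

/-! # The Martelli–Montanari algorithm (MMA) and its occur-check-less version MMA⁻ -/

/-- The variable `X` occurs in the equation `e`. -/
def occursInEqn (X : V) (e : Eqn F V) : Prop := Term.VarIn X e.1 ∨ Term.VarIn X e.2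

/-- The variable `X` occurs in equations of `E` other than `e`. -/
def occursElsewhere (X : V) (e : Eqn F V) (E : EqSet F V) : Prop :=
  ∃ e' ∈ E, e' ≠ e ∧ occursInEqn X e'

/-- Action (2) of MMA is applicable: `E` contains a clash `f(s₁,…,sₘ) = g(t₁,…,tₙ)`
(distinct function symbols; in a signature with arities, the same name with different
numbers of arguments also counts as distinct symbols). -/
def Clash (E : EqSet F V) : Prop :=
  ∃ f ss g ts, (Term.app f ss, Term.app g ts) ∈ E ∧ (f ≠ g ∨ ss.length ≠ ts.length)

/-- Action (6) of MMA (the occur-check failure) is applicable to `E`. -/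
def OccApplicable (E : EqSet F V) : Prop :=
  ∃ X t, (Term.var X, t) ∈ E ∧ Term.var X ≠ t ∧ Term.VarIn X t

/-- A (non-failing) step of MMA: actions (1), (3), (4), (5). -/
inductive MMAStep [DecidableEq V] : EqSet F V → EqSet F V → Prop
  | decomp {E : EqSet F V} {f : F} {ss ts : List (Term F V)} :
      (Term.app f ss, Term.app f ts) ∈ E → ss.length = ts.length →
      MMAStep E ((E \ {(Term.app f ss, Term.app f ts)}) ∪ {e | e ∈ ss.zip ts})
  | del {E : EqSet F V} {X : V} : (Term.var X, Term.var X) ∈ E →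
      MMAStep E (E \ {(Term.var X, Term.var X)})
  | orient {E : EqSet F V} {X : V} {t : Term F V} : (t, Term.var X) ∈ E → ¬ t.IsVar →
      MMAStep E ((E \ {(t, Term.var X)}) ∪ {(Term.var X, t)})
  | elim {E : EqSet F V} {X : V} {t : Term F V} :
      (Term.var X, t) ∈ E → Term.var X ≠ t → ¬ Term.VarIn X t →
      occursElsewhere X (Term.var X, t) E →
      MMAStep E (insert (Term.var X, t) (Eqn.subst (subst1 X t) '' (E \ {(Term.var X, t)})))

/-- `E'` is reachable from `E` by (non-failing) MMA steps. -/
def MMAReach [DecidableEq V] (E E' : EqSet F V) : Prop := Relation.ReflTransGen MMAStep E E'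

/-- `E` is not subject to occur-check: no run of MMA on `E` performs action (6),
i.e. action (6) is not applicable to any equation set reachable by MMA from `E`. -/
def NSTO [DecidableEq V] (E : EqSet F V) : Prop :=
  ∀ E', MMAReach E E' → ¬ OccApplicable E'

/-- A solved equation set: `X₁=t₁, …, Xₙ=tₙ` with `X₁,…,Xₙ` distinct variables
none of which occurs in any `tᵢ`. -/
def SolvedSet (E : EqSet F V) : Prop :=
  (∀ e ∈ E, ∃ X, e.1 = Term.var X) ∧
  (∀ e ∈ E, ∀ e' ∈ E, e.1 = e'.1 → e = e') ∧
  (∀ e ∈ E, ∀ e' ∈ E, ∀ X, e.1 = Term.var X → ¬ Term.VarIn X e'.2)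

/-- The relation `X ≻_E Y`: for some equation `X = t` of `E`, `Y ∈ Var(t)`. -/
def succRel (E : EqSet F V) (X Y : V) : Prop := ∃ t, (Term.var X, t) ∈ E ∧ Term.VarIn Y t

/-- A semi-solved equation set: `X₁=t₁, …, Xₙ=tₙ` with `X₁,…,Xₙ` distinct variables,
no `tᵢ` equal to `Xᵢ`, and whenever `Xᵢ` occurs in some `tₖ` then `Xᵢ ≻⁺_E Xᵢ`. -/
def SemiSolved (E : EqSet F V) : Prop :=
  (∀ e ∈ E, ∃ X, e.1 = Term.var X) ∧
  (∀ e ∈ E, ∀ e' ∈ E, e.1 = e'.1 → e = e') ∧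
  (∀ e ∈ E, e.1 ≠ e.2) ∧
  (∀ X, (∃ e' ∈ E, Term.VarIn X e'.2) → (∃ t, (Term.var X, t) ∈ E) →
    Relation.TransGen (succRel E) X X)

/-- `σ` is the substitution represented by the (solved) equation set `E`. -/
def Represents (E : EqSet F V) (σ : Subst F V) : Prop :=
  ∀ v, (∃ t, (Term.var v, t) ∈ E ∧ σ v = t) ∨ ((∀ t, (Term.var v, t) ∉ E) ∧ σ v = Term.var v)

/-- There is an occur-check free run of MMA on `E`: a maximal run never performing
action (6), hence ending either by action (2) (failure on a clash) or with success
(no action applicable any more, the final set being solved). (MMA always terminates,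
so runs are finite.) -/
def ExistsOCFreeRun [DecidableEq V] (E : EqSet F V) : Prop :=
  ∃ E', MMAReach E E' ∧ (Clash E' ∨ SolvedSet E')

/-- `u` is obtained from `s` by replacing *some* of the occurrences of the variable `X`
by the term `t`. -/
inductive ReplSome [DecidableEq V] (X : V) (t : Term F V) : Term F V → Term F V → Prop
  | keep (v : V) : ReplSome X t (Term.var v) (Term.var v)
  | repl : ReplSome X t (Term.var X) t
  | app {f : F} {ss ts : List (Term F V)} :
      List.Forall₂ (ReplSome X t) ss ts → ReplSome X t (Term.app f ss) (Term.app f ts)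

def ReplSomeEqn [DecidableEq V] (X : V) (t : Term F V) (e e' : Eqn F V) : Prop :=
  ReplSome X t e.1 e'.1 ∧ ReplSome X t e.2 e'.2

/-- The labels of the actions of MMA⁻. -/
inductive MLabel (F V : Type) where
  | decomp | del | orient
  | elim (X : V) (t : Term F V)
  | elim' (X : V) (t : Term F V)

/-- A configuration of MMA⁻: the current equation set together with the set of
variables on which action (5) has already been performed. -/
abbrev MState (F V : Type) := EqSet F V × Set V

/-- A (non-failing) step of MMA⁻, labelled by the action used: actions (1), (3), (4),
(5) (with condition `X ≠ t` instead of the occur-check `X ∉ Var(t)`), and (5')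
(replacing some occurrences of `X` by `t` in the other equations, allowed only if
action (5) has previously been performed on an equation with left-hand side `X`). -/
inductive MMStepL [DecidableEq V] : MLabel F V → MState F V → MState F V → Prop
  | decomp {E : EqSet F V} {H : Set V} {f : F} {ss ts : List (Term F V)} :
      (Term.app f ss, Term.app f ts) ∈ E → ss.length = ts.length →
      MMStepL MLabel.decomp (E, H)
        ((E \ {(Term.app f ss, Term.app f ts)}) ∪ {e | e ∈ ss.zip ts}, H)
  | del {E : EqSet F V} {H : Set V} {X : V} : (Term.var X, Term.var X) ∈ E →
      MMStepL MLabel.del (E, H) (E \ {(Term.var X, Term.var X)}, H)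
  | orient {E : EqSet F V} {H : Set V} {X : V} {t : Term F V} :
      (t, Term.var X) ∈ E → ¬ t.IsVar →
      MMStepL MLabel.orient (E, H) ((E \ {(t, Term.var X)}) ∪ {(Term.var X, t)}, H)
  | elim {E : EqSet F V} {H : Set V} {X : V} {t : Term F V} :
      (Term.var X, t) ∈ E → Term.var X ≠ t →
      occursElsewhere X (Term.var X, t) E →
      MMStepL (MLabel.elim X t) (E, H)
        (insert (Term.var X, t) (Eqn.subst (subst1 X t) '' (E \ {(Term.var X, t)})),
         insert X H)
  | elim' {E : EqSet F V} {H : Set V} {X : V} {t : Term F V} {g : Eqn F V → Eqn F V} :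
      (Term.var X, t) ∈ E → Term.var X ≠ t →
      occursElsewhere X (Term.var X, t) E → X ∈ H →
      (∀ e ∈ E \ {(Term.var X, t)}, ReplSomeEqn X t e (g e)) →
      MMStepL (MLabel.elim' X t) (E, H)
        (insert (Term.var X, t) (g '' (E \ {(Term.var X, t)})), H)

/-- A (non-failing) step of MMA⁻. -/
def MMStep [DecidableEq V] (s s' : MState F V) : Prop := ∃ l, MMStepL l s s'

/-- Reachability by (non-failing) steps of MMA⁻. A run of MMA⁻ on an equation set `E`
starts in the configuration `(E, ∅)`; it terminates with failure when action (2) is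
performed (a clash is present), and it may terminate with success when the current
equation set is semi-solved. -/
def MMReach [DecidableEq V] (s s' : MState F V) : Prop := Relation.ReflTransGen MMStep s s'

/-!
Decomposing `A = H` in parallel (ignoring clashes) yields bindings `x ↦ r`. Since the pair `A, H`
is linear, no variable occurs twice among the keys and right-hand sides, so the bindings define a
substitution `σ`; it unifies `A` and `H` because they are unifiable, and `σθ = θ` because `θ`
solves every binding. As `θ` is most general, `σ = θη`, so `η` is a left inverse of `θ` on `Bσ`:
`θ` merely renames the variables of `Bσ` injectively. Finally `Bσ` is linear: a variable of `B`
does not occur in `H`, so when it is a key, its binding's right-hand side is a subterm of `H`, and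
these right-hand sides are linear and pairwise variable-disjoint.
-/

namespace List

theorem Subperm.nodup {α : Type*} {l₁ l₂ : List α} (h : l₁ <+~ l₂) (h₂ : l₂.Nodup) :
    l₁.Nodup := by
  obtain ⟨l, hperm, hsub⟩ := h
  exact hperm.nodup_iff.mp (h₂.sublist hsub)

theorem flatMap_subperm_flatMap {α β : Type*} {l : List α} {f g : α → List β}
    (h : ∀ a ∈ l, f a <+~ g a) : l.flatMap f <+~ l.flatMap g := by
  induction l with
  | nil => simp
  | cons a l ih =>
    simp only [flatMap_cons]
    exact (h a mem_cons_self).append (ih fun b hb => h b (mem_cons_of_mem a hb))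

theorem flatMap_zip_subperm {α β γ : Type*} (f : α → List γ) (g : β → List γ) :
    ∀ (l₁ : List α) (l₂ : List β),
      (l₁.zip l₂).flatMap (fun p => f p.1 ++ g p.2) <+~ l₁.flatMap f ++ l₂.flatMap g
  | [], _ => by simp
  | _ :: _, [] => by simp
  | a :: l₁, b :: l₂ => by
    simp only [zip_cons_cons, flatMap_cons, append_assoc]
    refine ((subperm_append_left _).mpr
      ((subperm_append_left _).mpr (flatMap_zip_subperm f g l₁ l₂))).trans (Perm.subperm ?_)
    exact (perm_append_left_iff _).mpr (perm_append_comm_assoc _ _ _)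

theorem disjoint_of_nodup_flatMap {α β : Type*} {l : List α} {f : α → List β}
    (h : (l.flatMap f).Nodup) {a b : α} (ha : a ∈ l) (hb : b ∈ l) (hab : a ≠ b) :
    (f a).Disjoint (f b) :=
  have : Std.Symm (Function.onFun List.Disjoint f) := ⟨fun _ _ h => h.symm⟩
  (nodup_flatMap.mp h).2.forall ha hb hab

theorem map_eq_map_iff_zip {α β γ : Type*} {f : α → γ} {g : β → γ} {l₁ : List α}
    {l₂ : List β} :
    l₁.map f = l₂.map g ↔ l₁.length = l₂.length ∧ ∀ p ∈ l₁.zip l₂, f p.1 = g p.2 := by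
  rw [← forall₂_eq_eq_eq, forall₂_map_left_iff, forall₂_map_right_iff, forall₂_iff_zip]
  simp

end List

namespace Term

@[induction_eliminator]
theorem ind {motive : Term F V → Prop} (var : ∀ v, motive (var v))
    (app : ∀ f ts, (∀ t ∈ ts, motive t) → motive (app f ts)) : ∀ t, motive t
  | .var v => var v
  | .app f ts => app f ts fun t _ => ind var app t

def varList : Term F V → List V
  | .var v => [v]
  | .app _ ts => ts.attach.flatMap fun ⟨t, _⟩ => t.varList

@[simp]
theorem varList_var (v : V) : (var v : Term F V).varList = [v] := by
  simp [varList]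

@[simp]
theorem varList_app (f : F) (ts : List (Term F V)) :
    (app f ts).varList = ts.flatMap varList := by
  simp [varList]

@[simp]
theorem subst_var (σ : Subst F V) (v : V) : (var v).subst σ = σ v := by
  simp [subst]

@[simp]
theorem subst_app (σ : Subst F V) (f : F) (ts : List (Term F V)) :
    (app f ts).subst σ = app f (ts.map (subst σ)) := by
  simp [subst]

theorem varList_subst (σ : Subst F V) (t : Term F V) :
    (t.subst σ).varList = t.varList.flatMap fun v => (σ v).varList := by
  induction t with
  | var v => simp
  | app f ts ih =>
    simp only [subst_app, varList_app, List.flatMap_map, List.flatMap_assoc]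
    exact List.flatMap_congr ih

theorem subst_comp (σ τ : Subst F V) (t : Term F V) :
    (t.subst σ).subst τ = t.subst (σ.comp τ) := by
  induction t with
  | var v => simp [Subst.comp]
  | app f ts ih => simpa using List.map_congr_left ih

theorem subst_eq_var_of_subst_eq_self {σ : Subst F V} {t : Term F V} (h : t.subst σ = t)
    {w : V} (hw : w ∈ t.varList) : σ w = var w := by
  induction t with
  | var v => simp_all
  | app f ts ih =>
    obtain ⟨t, ht, hw⟩ := List.mem_flatMap.mp (varList_app f ts ▸ hw)
    simp only [subst_app, app.injEq, true_and] at h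
    exact ih t ht (List.map_eq_map_iff.mp (h.trans (List.map_id ts).symm) t ht) hw

theorem subst_eq_self {σ : Subst F V} {t : Term F V} (h : ∀ w ∈ t.varList, σ w = var w) :
    t.subst σ = t := by
  induction t with
  | var v => simpa using h
  | app f ts ih =>
    simp only [subst_app, app.injEq, true_and]
    refine (List.map_congr_left fun t ht => ?_).trans (List.map_id ts)
    exact ih t ht fun w hw => h w (by simpa using ⟨t, ht, hw⟩)

section Count

variable [DecidableEq V]

theorem count_eq_count_varList (v : V) (t : Term F V) : t.count v = t.varList.count v := by
  induction t with
  | var w => by_cases h : w = v <;> simp [count, h]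
  | app f ts ih =>
    simp only [count, List.attach_map_val, varList_app, List.count_flatMap]
    exact congrArg List.sum (List.map_congr_left ih)

theorem linear_iff_nodup {t : Term F V} : t.Linear ↔ t.varList.Nodup := by
  simp [Linear, List.nodup_iff_count_le_one, count_eq_count_varList]

theorem nodup_varList_append_iff {s t : Term F V} :
    (s.varList ++ t.varList).Nodup ↔ ∀ v, s.count v + t.count v ≤ 1 := by
  simp [List.nodup_iff_count_le_one, count_eq_count_varList]

end Count

theorem nodup_varList_subst {σ : Subst F V} {t : Term F V} (ht : t.varList.Nodup)
    (hσ : ∀ v ∈ t.varList, (σ v).varList.Nodup)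
    (hdisj : ∀ v ∈ t.varList, ∀ w ∈ t.varList, v ≠ w → (σ v).varList.Disjoint (σ w).varList) :
    (t.subst σ).varList.Nodup := by
  rw [varList_subst, List.nodup_flatMap]
  exact ⟨hσ, ht.imp_of_mem fun hv hw hvw => hdisj _ hv _ hw hvw⟩

theorem exists_eq_var_of_subst_eq_var {θ η : Subst F V} {w : V} (h : (θ w).subst η = var w) :
    ∃ u, θ w = var u ∧ η u = var w := by
  cases hθw : θ w with
  | var u => exact ⟨u, rfl, by simpa [hθw] using h⟩
  | app f ts => simp [hθw] at h

/-- A substitution with a left inverse on `t` renames the variables of `t` injectively. -/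
theorem nodup_varList_subst_of_subst_subst_eq {θ η : Subst F V} {t : Term F V}
    (ht : t.varList.Nodup) (h : (t.subst θ).subst η = t) : (t.subst θ).varList.Nodup := by
  rw [subst_comp] at h
  have hren : ∀ w ∈ t.varList, ∃ u, θ w = var u ∧ η u = var w := fun w hw =>
    exists_eq_var_of_subst_eq_var (subst_eq_var_of_subst_eq_self h hw)
  refine nodup_varList_subst ht (fun w hw => ?_) fun v hv w hw hvw => ?_
  · obtain ⟨u, hu, -⟩ := hren w hw
    simp [hu]
  · obtain ⟨u₁, hu₁, hη₁⟩ := hren v hv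
    obtain ⟨u₂, hu₂, hη₂⟩ := hren w hw
    simp only [hu₁, hu₂, varList_var, List.disjoint_singleton, List.mem_singleton]
    rintro rfl
    exact hvw (var.inj (hη₁.symm.trans hη₂))

/-- The bindings `x ↦ r` read off `s = t`; clashing symbols and arities are ignored. -/
def bindings : Term F V → Term F V → List (V × Term F V)
  | var x, t => [(x, t)]
  | app f ss, var y => [(y, app f ss)]
  | app _ ss, app _ ts => (ss.attach.zip ts).flatMap fun (⟨s, _⟩, t) => bindings s t

theorem bindings_app_app (f g : F) (ss ts : List (Term F V)) :
    bindings (app f ss) (app g ts) = (ss.zip ts).flatMap fun p => bindings p.1 p.2 := by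
  have h :=
    List.flatMap_map (Prod.map Subtype.val id) (fun p => bindings p.1 p.2) (ss.attach.zip ts)
  rw [← List.zip_map_left, List.attach_map_subtype_val] at h
  simpa [bindings] using h.symm

def bindingVars (L : List (V × Term F V)) : List V := L.flatMap fun e => e.1 :: e.2.varList

open List in
theorem bindingVars_bindings_subperm (s t : Term F V) :
    bindingVars (bindings s t) <+~ s.varList ++ t.varList := by
  induction s generalizing t with
  | var x => simpa [bindings, bindingVars] using Subperm.refl _
  | app f ss ih =>
    cases t with
    | var y => simpa [bindings, bindingVars] using (perm_append_singleton _ _).symm.subperm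
    | app g ts =>
      rw [bindings_app_app, bindingVars, flatMap_assoc, varList_app, varList_app]
      refine (flatMap_subperm_flatMap fun p hp => ?_).trans (flatMap_zip_subperm _ _ ss ts)
      exact ih p.1 (of_mem_zip hp).1 p.2

theorem varList_of_mem_bindings {s t : Term F V} {e : V × Term F V} (he : e ∈ bindings s t) :
    (e.1 ∈ s.varList ∧ e.2.varList ⊆ t.varList) ∨
      (e.1 ∈ t.varList ∧ e.2.varList ⊆ s.varList) := by
  induction s generalizing t with
  | var x => simp_all [bindings]
  | app f ss ih =>
    cases t with
    | var y => simp_all [bindings]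
    | app g ts =>
      rw [bindings_app_app, List.mem_flatMap] at he
      obtain ⟨p, hp, he⟩ := he
      obtain ⟨hs, ht⟩ := List.of_mem_zip hp
      have hs' : p.1.varList ⊆ (app f ss).varList := fun v hv => by simpa using ⟨p.1, hs, hv⟩
      have ht' : p.2.varList ⊆ (app g ts).varList := fun v hv => by simpa using ⟨p.2, ht, hv⟩
      rcases ih p.1 hs he with ⟨h₁, h₂⟩ | ⟨h₁, h₂⟩
      · exact .inl ⟨hs' h₁, List.Subset.trans h₂ ht'⟩
      · exact .inr ⟨ht' h₁, List.Subset.trans h₂ hs'⟩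

def Solves (τ : Subst F V) (L : List (V × Term F V)) : Prop := ∀ e ∈ L, τ e.1 = e.2.subst τ

theorem solves_bindings {τ : Subst F V} {s t : Term F V} (h : IsUnifierPair τ s t) :
    Solves τ (bindings s t) := by
  induction s generalizing t with
  | var x => simpa [Solves, bindings, IsUnifierPair] using h
  | app f ss ih =>
    cases t with
    | var y => simpa [Solves, bindings, IsUnifierPair] using h.symm
    | app g ts =>
      simp only [IsUnifierPair, subst_app, app.injEq, List.map_eq_map_iff_zip] at h
      intro e he
      rw [bindings_app_app, List.mem_flatMap] at he
      obtain ⟨p, hp, he⟩ := he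
      exact ih p.1 (List.of_mem_zip hp).1 (h.2.2 p hp) e he

/-- The unifiability hypothesis rules out the clashes that `bindings` ignores. -/
theorem isUnifierPair_of_solves {τ σ : Subst F V} {s t : Term F V} (hτ : IsUnifierPair τ s t)
    (hσ : Solves σ (bindings s t)) : IsUnifierPair σ s t := by
  induction s generalizing t with
  | var x => simpa [Solves, bindings, IsUnifierPair] using hσ
  | app f ss ih =>
    cases t with
    | var y => simpa [Solves, bindings, IsUnifierPair, eq_comm] using hσ
    | app g ts =>
      simp only [IsUnifierPair, subst_app, app.injEq, List.map_eq_map_iff_zip] at hτ ⊢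
      refine ⟨hτ.1, hτ.2.1, fun p hp => ih p.1 (List.of_mem_zip hp).1 (hτ.2.2 p hp) ?_⟩
      exact fun e he => hσ e (by rw [bindings_app_app]; exact List.mem_flatMap.mpr ⟨p, hp, he⟩)

section LinearBindings

variable {L : List (V × Term F V)}

theorem eq_of_mem_of_fst_eq (hL : (bindingVars L).Nodup) {e e' : V × Term F V} (he : e ∈ L)
    (he' : e' ∈ L) (h : e.1 = e'.1) : e = e' := by
  by_contra hne
  exact List.disjoint_of_nodup_flatMap hL he he' hne List.mem_cons_self (h ▸ List.mem_cons_self)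

theorem fst_not_mem_varList_snd (hL : (bindingVars L).Nodup) {e e' : V × Term F V}
    (he : e ∈ L) (he' : e' ∈ L) : e.1 ∉ e'.2.varList := by
  by_cases hne : e = e'
  · subst hne
    exact (List.nodup_cons.mp ((List.nodup_flatMap.mp hL).1 e he)).1
  · exact fun h => List.disjoint_of_nodup_flatMap hL he he' hne List.mem_cons_self
      (List.mem_cons_of_mem _ h)

theorem nodup_varList_snd (hL : (bindingVars L).Nodup) {e : V × Term F V} (he : e ∈ L) :
    e.2.varList.Nodup :=
  (List.nodup_cons.mp ((List.nodup_flatMap.mp hL).1 e he)).2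

theorem disjoint_varList_snd (hL : (bindingVars L).Nodup) {e e' : V × Term F V} (he : e ∈ L)
    (he' : e' ∈ L) (hne : e ≠ e') : e.2.varList.Disjoint e'.2.varList :=
  fun _ h h' => List.disjoint_of_nodup_flatMap hL he he' hne (List.mem_cons_of_mem _ h)
    (List.mem_cons_of_mem _ h')

variable [DecidableEq V]

def bindingSubst (L : List (V × Term F V)) : Subst F V :=
  fun v => ((L.find? fun e => e.1 = v).map Prod.snd).getD (var v)

theorem bindingSubst_of_mem (hL : (bindingVars L).Nodup) {e : V × Term F V} (he : e ∈ L) :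
    bindingSubst L e.1 = e.2 := by
  unfold bindingSubst
  cases hfind : L.find? fun e' => e'.1 = e.1 with
  | none => simpa using List.find?_eq_none.mp hfind e he
  | some e' =>
    have he'e : e' = e := eq_of_mem_of_fst_eq hL (List.mem_of_find?_eq_some hfind) he
      (by simpa using List.find?_some hfind)
    simp [he'e]

theorem bindingSubst_of_forall_ne {v : V} (h : ∀ e ∈ L, e.1 ≠ v) : bindingSubst L v = var v := by
  have hfind : (L.find? fun e => e.1 = v) = none := List.find?_eq_none.mpr (by simpa using h)
  simp [bindingSubst, hfind]

theorem solves_bindingSubst (hL : (bindingVars L).Nodup) : Solves (bindingSubst L) L := by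
  intro e he
  rw [bindingSubst_of_mem hL he, subst_eq_self fun w hw => bindingSubst_of_forall_ne ?_]
  exact fun e' he' hw' => fst_not_mem_varList_snd hL he' he (hw' ▸ hw)

theorem bindingSubst_comp_of_solves (hL : (bindingVars L).Nodup) {τ : Subst F V}
    (hτ : Solves τ L) : (bindingSubst L).comp τ = τ := by
  funext v
  by_cases hv : ∃ e ∈ L, e.1 = v
  · obtain ⟨e, he, rfl⟩ := hv
    simp only [Subst.comp, bindingSubst_of_mem hL he, hτ e he]
  · push Not at hv
    simp [Subst.comp, bindingSubst_of_forall_ne hv]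

theorem nodup_varList_subst_bindingSubst (hL : (bindingVars L).Nodup) {B : Term F V}
    {W : List V} (hB : B.varList.Nodup) (hBW : B.varList.Disjoint W)
    (hrhs : ∀ e ∈ L, e.1 ∈ B.varList → e.2.varList ⊆ W) :
    (B.subst (bindingSubst L)).varList.Nodup := by
  have key_disjoint : ∀ e ∈ L, ∀ w ∈ B.varList, e.1 ∈ B.varList → (∀ e' ∈ L, e'.1 ≠ w) →
      (bindingSubst L e.1).varList.Disjoint (bindingSubst L w).varList := by
    intro e he w hw heB hwL
    rw [bindingSubst_of_mem hL he, bindingSubst_of_forall_ne hwL, varList_var,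
      List.disjoint_singleton]
    exact fun hwe => hBW hw (hrhs e he heB hwe)
  refine nodup_varList_subst hB (fun v _ => ?_) fun v hv w hw hvw => ?_
  · by_cases hvL : ∃ e ∈ L, e.1 = v
    · obtain ⟨e, he, rfl⟩ := hvL
      simpa [bindingSubst_of_mem hL he] using nodup_varList_snd hL he
    · push Not at hvL
      simp [bindingSubst_of_forall_ne hvL]
  by_cases hvL : ∃ e ∈ L, e.1 = v <;> by_cases hwL : ∃ e ∈ L, e.1 = w
  · obtain ⟨e, he, rfl⟩ := hvL
    obtain ⟨e', he', rfl⟩ := hwL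
    rw [bindingSubst_of_mem hL he, bindingSubst_of_mem hL he']
    exact disjoint_varList_snd hL he he' fun h => hvw (congrArg Prod.fst h)
  · obtain ⟨e, he, rfl⟩ := hvL
    push Not at hwL
    exact key_disjoint e he w hw hv hwL
  · obtain ⟨e, he, rfl⟩ := hwL
    push Not at hvL
    exact (key_disjoint e he v hv hw hvL).symm
  · push Not at hvL hwL
    simpa [bindingSubst_of_forall_ne hvL, bindingSubst_of_forall_ne hwL] using hvw.symm

end LinearBindings

end Term

/-- If each of the pairs of atoms `A`, `H` and `B`, `H` is linear and
`θ` is an mgu of `A` and `H`, then `Bθ` is linear. -/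
theorem stmt2 {F V : Type} [DecidableEq V] (A H B : Term F V) (θ : Subst F V)
    (hlinAH : ∀ v, Term.count v A + Term.count v H ≤ 1)
    (hlinBH : ∀ v, Term.count v B + Term.count v H ≤ 1)
    (hmgu : IsMGUPair θ A H) :
    (B.subst θ).Linear := by
  open Term in
  obtain ⟨hθ, hmost⟩ := hmgu
  have hL : (bindingVars (bindings A H)).Nodup :=
    (bindingVars_bindings_subperm A H).nodup (nodup_varList_append_iff.mpr hlinAH)
  obtain ⟨hB, -, hBH⟩ := List.nodup_append.mp (nodup_varList_append_iff.mpr hlinBH)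
  set σ := bindingSubst (bindings A H)
  obtain ⟨η, hη⟩ := hmost σ (isUnifierPair_of_solves hθ (solves_bindingSubst hL))
  have hσθ : σ.comp θ = θ := bindingSubst_comp_of_solves hL (solves_bindings hθ)
  have hBσ : (B.subst σ).varList.Nodup :=
    nodup_varList_subst_bindingSubst hL hB (fun v hvB hvH => hBH v hvB v hvH rfl)
      fun e he heB => ((varList_of_mem_bindings he).resolve_right fun h => hBH _ heB _ h.1 rfl).2
  have hinv : ((B.subst σ).subst θ).subst η = B.subst σ := by
    rw [subst_comp _ θ B, hσθ, subst_comp, ← hη]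
  rw [linear_iff_nodup, ← hσθ, ← subst_comp]
  exact nodup_varList_subst_of_subst_subst_eq hBσ hinv
end

section
/- If a finite equation set E is NSTO (no run of MMA on E performs action (6)), then every run of MMA⁻ on E is a run of MMA. -/
variable {F V : Type}

/-! Once action (5) has been performed on `X = t`, the variable `X` occurs in no other
equation, and every later step keeps it that way. So action (5') never finds an occurrence
of `X` to replace, every step of MMA⁻ is one of MMA, and the sets MMA⁻ reaches are reached
by MMA: there NSTO supplies the condition `X ∉ Var(t)` that action (5) of MMA needs. -/

namespace Term

theorem varIn_var_iff {v w : V} : VarIn v (var w : Term F V) ↔ w = v :=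
  ⟨fun | .var => rfl, fun h => h ▸ .var⟩

theorem varIn_app_iff {v : V} {f : F} {ts : List (Term F V)} :
    VarIn v (app f ts) ↔ ∃ t ∈ ts, VarIn v t :=
  ⟨fun | .app hmem hv => ⟨_, hmem, hv⟩, fun ⟨_, hmem, hv⟩ => .app hmem hv⟩

theorem varIn_subst_iff {σ : Subst F V} {v : V} :
    ∀ {s : Term F V}, VarIn v (s.subst σ) ↔ ∃ w, VarIn w s ∧ VarIn v (σ w)
  | var x => by simp [subst, varIn_var_iff]
  | app f ts => by
    simp only [subst, varIn_app_iff, List.mem_map, List.mem_attach, true_and,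
      Subtype.exists]
    constructor
    · rintro ⟨_, ⟨t, ht, rfl⟩, hv⟩
      obtain ⟨w, hw, hv⟩ := varIn_subst_iff.mp hv
      exact ⟨w, ⟨t, ht, hw⟩, hv⟩
    · rintro ⟨w, ⟨t, ht, hw⟩, hv⟩
      exact ⟨_, ⟨t, ht, rfl⟩, varIn_subst_iff.mpr ⟨w, hw, hv⟩⟩

variable [DecidableEq V]

theorem varIn_subst_subst1 {X Y : V} {u s : Term F V} (h : VarIn X (s.subst (subst1 Y u))) :
    (VarIn X s ∧ X ≠ Y) ∨ (VarIn Y s ∧ VarIn X u) := by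
  obtain ⟨w, hws, hv⟩ := varIn_subst_iff.mp h
  by_cases hw : w = Y
  · subst hw
    simp only [subst1, if_true] at hv
    exact .inr ⟨hws, hv⟩
  · simp only [subst1, if_neg hw, varIn_var_iff] at hv
    exact .inl ⟨hv ▸ hws, hv ▸ hw⟩

theorem varIn_of_varIn_subst_subst1 {X Y : V} {u s : Term F V} (hu : ¬ VarIn X u)
    (h : VarIn X (s.subst (subst1 Y u))) : VarIn X s ∧ X ≠ Y :=
  (varIn_subst_subst1 h).resolve_right fun h => hu h.2

theorem subst_subst1_eq_var {X Y : V} {u s : Term F V} (h : s.subst (subst1 Y u) = var X) :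
    (s = var X ∧ X ≠ Y) ∨ (s = var Y ∧ u = var X) := by
  cases s with
  | var w =>
    by_cases hw : w = Y
    · subst hw
      simp only [subst, subst1, if_true] at h
      exact .inr ⟨rfl, h⟩
    · simp only [subst, subst1, if_neg hw, var.injEq] at h
      exact .inl ⟨h ▸ rfl, h ▸ hw⟩
  | app f ts => simp [subst] at h

end Term

open Term

structure Eliminated (E : EqSet F V) (X : V) : Prop where
  not_varIn_rhs : ∀ e ∈ E, ¬ VarIn X e.2
  lhs_eq_of_varIn : ∀ e ∈ E, VarIn X e.1 → e.1 = var X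
  eq_of_lhs_eq : ∀ e ∈ E, ∀ e' ∈ E, e.1 = var X → e'.1 = var X → e = e'

namespace Eliminated

variable {E : EqSet F V} {X : V}

theorem not_occursElsewhere {t : Term F V} (h : Eliminated E X) (hmem : (var X, t) ∈ E) :
    ¬ occursElsewhere X (var X, t) E := by
  rintro ⟨e, he, hne, hl | hr⟩
  · exact hne (h.eq_of_lhs_eq e he _ hmem (h.lhs_eq_of_varIn e he hl) rfl)
  · exact h.not_varIn_rhs e he hr

theorem of_subset_union {N E' : EqSet F V} (h : Eliminated E X) (hsub : E' ⊆ E ∪ N)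
    (hN : ∀ e ∈ N, ¬ occursInEqn X e) : Eliminated E' X := by
  have lhs_ne : ∀ e ∈ N, e.1 ≠ var X := fun e he hl => hN e he (.inl (hl ▸ .var))
  refine ⟨fun e he => ?_, fun e he => ?_, fun e he e' he' => ?_⟩
  · rcases hsub he with he | he
    · exact h.not_varIn_rhs e he
    · exact fun hv => hN e he (.inr hv)
  · rcases hsub he with he | he
    · exact h.lhs_eq_of_varIn e he
    · exact fun hv => absurd (.inl hv) (hN e he)
  · rcases hsub he with he | he
    · rcases hsub he' with he' | he'
      · exact h.eq_of_lhs_eq e he e' he'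
      · exact fun _ hl' => absurd hl' (lhs_ne e' he')
    · exact fun hl => absurd hl (lhs_ne e he)

variable [DecidableEq V]

theorem elim_self {Y : V} {u : Term F V} (hYu : ¬ VarIn Y u) :
    Eliminated (insert (var Y, u) (Eqn.subst (subst1 Y u) '' (E \ {(var Y, u)}))) Y := by
  have hY : ∀ s : Term F V, ¬ VarIn Y (s.subst (subst1 Y u)) :=
    fun s hv => (varIn_of_varIn_subst_subst1 hYu hv).2 rfl
  refine ⟨?_, ?_, ?_⟩
  · rintro e (rfl | ⟨e₀, -, rfl⟩)
    exacts [hYu, hY e₀.2]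
  · rintro e (rfl | ⟨e₀, -, rfl⟩) hv
    exacts [rfl, absurd hv (hY e₀.1)]
  · have hnew : ∀ e ∈ insert (var Y, u) (Eqn.subst (subst1 Y u) '' (E \ {(var Y, u)})),
        e.1 = var Y → e = (var Y, u) := by
      rintro e (rfl | ⟨e₀, -, rfl⟩) hl
      · rfl
      · have := hY e₀.1
        rw [show e₀.1.subst (subst1 Y u) = var Y from hl] at this
        exact absurd .var this
    exact fun e he e' he' hl hl' => (hnew e he hl).trans (hnew e' he' hl').symm

theorem elim_other {Y : V} {u : Term F V} (h : Eliminated E X) (hmem : (var Y, u) ∈ E)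
    (hXY : X ≠ Y) :
    Eliminated (insert (var Y, u) (Eqn.subst (subst1 Y u) '' (E \ {(var Y, u)}))) X := by
  have hXu : ¬ VarIn X u := h.not_varIn_rhs _ hmem
  have hlhs : ∀ e₀ ∈ E, (e₀.1.subst (subst1 Y u) = var X ↔ e₀.1 = var X) := by
    refine fun e₀ _ => ⟨fun hl => ?_, fun hl => ?_⟩
    · rcases subst_subst1_eq_var hl with ⟨hl, -⟩ | ⟨-, rfl⟩
      exacts [hl, absurd .var hXu]
    · simp [hl, subst, subst1, hXY]
  refine ⟨?_, ?_, ?_⟩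
  · rintro e (rfl | ⟨e₀, he₀, rfl⟩) hv
    exacts [hXu hv, h.not_varIn_rhs e₀ he₀.1 (varIn_of_varIn_subst_subst1 hXu hv).1]
  · rintro e (rfl | ⟨e₀, he₀, rfl⟩) hv
    · exact absurd (varIn_var_iff.mp hv) (Ne.symm hXY)
    · exact (hlhs e₀ he₀.1).mpr
        (h.lhs_eq_of_varIn e₀ he₀.1 (varIn_of_varIn_subst_subst1 hXu hv).1)
  · rintro e (rfl | ⟨e₀, he₀, rfl⟩) e' (rfl | ⟨e₀', he₀', rfl⟩) hl hl'
    · rfl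
    all_goals first
      | exact absurd (var.inj hl) (Ne.symm hXY)
      | exact absurd (var.inj hl') (Ne.symm hXY)
      | exact congrArg _ (h.eq_of_lhs_eq e₀ he₀.1 e₀' he₀'.1
          ((hlhs e₀ he₀.1).mp hl) ((hlhs e₀' he₀'.1).mp hl'))

theorem of_mmaStep {E' : EqSet F V} (h : Eliminated E X) (hstep : MMAStep E E') :
    Eliminated E' X := by
  cases hstep with
  | @decomp f ss ts hmem _ =>
    refine h.of_subset_union (Set.union_subset_union_left _ Set.sdiff_subset) fun e he hocc => ?_
    obtain ⟨hs, ht⟩ := List.of_mem_zip (a := e.1) (b := e.2) he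
    rcases hocc with hv | hv
    · exact nomatch h.lhs_eq_of_varIn _ hmem (.app hs hv)
    · exact h.not_varIn_rhs _ hmem (.app ht hv)
  | del hmem => exact h.of_subset_union (N := ∅) (by simp) (by simp)
  | @orient Y u hmem hu =>
    refine h.of_subset_union (Set.union_subset_union_left _ Set.sdiff_subset) ?_
    rintro _ rfl (hv | hv)
    · exact h.not_varIn_rhs _ hmem hv
    · have hu' : u = var X := h.lhs_eq_of_varIn _ hmem hv
      exact hu (hu' ▸ trivial)
  | @elim Y u hmem _ hYu _ =>
    by_cases hXY : X = Y
    · subst hXY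
      exact elim_self hYu
    · exact h.elim_other hmem hXY

end Eliminated

section

variable [DecidableEq V]

theorem MMStepL.toMMAStep {E : EqSet F V} {H : Set V} {l : MLabel F V} {s : MState F V}
    (hocc : ¬ OccApplicable E) (hH : ∀ X ∈ H, Eliminated E X) (h : MMStepL l (E, H) s) :
    MMAStep E s.1 := by
  cases h with
  | decomp hmem hlen => exact .decomp hmem hlen
  | del hmem => exact .del hmem
  | orient hmem hu => exact .orient hmem hu
  | @elim _ _ Y u hmem hne hoccY =>
    exact .elim hmem hne (fun hv => hocc ⟨Y, u, hmem, hne, hv⟩) hoccY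
  | elim' hmem _ hoccY hY => exact absurd hoccY ((hH _ hY).not_occursElsewhere hmem)

theorem MMStepL.eliminated {E : EqSet F V} {H : Set V} {l : MLabel F V} {s : MState F V}
    (hocc : ¬ OccApplicable E) (hH : ∀ X ∈ H, Eliminated E X) (h : MMStepL l (E, H) s) :
    ∀ X ∈ s.2, Eliminated s.1 X := by
  have hmma := h.toMMAStep hocc hH
  cases h with
  | @elim _ _ Y u hmem hne _ =>
    rintro X (rfl | hX)
    exacts [Eliminated.elim_self fun hv => hocc ⟨X, u, hmem, hne, hv⟩,
      (hH X hX).of_mmaStep hmma]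
  | _ => exact fun X hX => (hH X hX).of_mmaStep hmma

theorem MMReach.mmaReach_and_eliminated {E : EqSet F V} (hnsto : NSTO E) {s : MState F V}
    (h : MMReach (E, ∅) s) : MMAReach E s.1 ∧ ∀ X ∈ s.2, Eliminated s.1 X := by
  induction h with
  | refl => exact ⟨.refl, fun _ h => absurd h (Set.notMem_empty _)⟩
  | tail _ hstep ih =>
    obtain ⟨l, hstep⟩ := hstep
    have hocc := hnsto _ ih.1
    exact ⟨ih.1.tail (hstep.toMMAStep hocc ih.2), hstep.eliminated hocc ih.2⟩

end

theorem stmt13_general {F V : Type} [DecidableEq V] (E : EqSet F V)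
    (hnsto : NSTO E) :
    ∀ (E' : EqSet F V) (H : Set V), MMReach (E, ∅) (E', H) →
      ∀ s' : MState F V, MMStep (E', H) s' → MMAStep E' s'.1 := by
  intro E' H hreach s' ⟨_, hstep⟩
  obtain ⟨hmma, hH⟩ := hreach.mmaReach_and_eliminated hnsto
  exact hstep.toMMAStep (hnsto _ hmma) hH

/-- If a finite equation set `E` is NSTO (no run of MMA on `E`
performs action (6)), then every run of MMA⁻ on `E` is a run of MMA: every MMA⁻
step from any configuration reached from `(E, ∅)` is an MMA step. -/
theorem stmt13 {F V : Type} [DecidableEq V] (E : EqSet F V) (hfin : E.Finite)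
    (hnsto : NSTO E) :
    ∀ (E' : EqSet F V) (H : Set V), MMReach (E, ∅) (E', H) →
      ∀ s' : MState F V, MMStep (E', H) s' → MMAStep E' s'.1 :=
  stmt13_general E hnsto
end
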